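/- (Lemma on error propagation for normalized matrices.) Let W ∈ ℝ^{n×n} have nonnegative entries and at least one positive entry per row, E ∈ ℝ^{n×n} an error matrix, W_E = W + E, D = diag(W·1), D_E = diag(W_E·1), A = D^{-1/2} W D^{-1/2}, A_E = D_E^{-1/2} W_E D_E^{-1/2}. Let d_min be the minimum diagonal entry of D, η = d_min/‖W‖_∞, ε = ‖E‖_∞/‖W‖_∞. If ε < η then ‖A - A_E‖_∞ ≤ ε(1+η)/(η(η-ε)). -/

import Mathlib

open Matrix

/-!
With `P = D^{-1/2}` and `Q = D_E^{-1/2}`,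
`A - A_E = P (W - W_E) P + (P - Q) W_E P + Q W_E (P - Q)`, and `‖·‖_∞` is submultiplicative
and equals the sup norm of the diagonal on diagonal matrices. Row sums move by at most `‖E‖_∞`,
so `d_i ≥ d_min` and `d_{E,i} ≥ d_min - ‖E‖_∞ > 0`; with
`x^{-1/2} - y^{-1/2} = (y - x) / (√x √y (√x + √y))` this bounds `‖P‖`, `‖Q‖` and `‖P - Q‖`.
The resulting bound simplifies to `‖E‖ (‖W‖ + d_min) / (d_min (d_min - ‖E‖))`, which is the
claimed one after dividing numerator and denominator by `‖W‖²`.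
-/

attribute [local instance] Matrix.linftyOpNormedAddCommGroup Matrix.linftyOpNormedRing

theorem iSup_sum_abs_eq_linfty_opNorm {m n : Type*} [Fintype m] [Fintype n]
    (M : Matrix m n ℝ) : (⨆ i, ∑ j, |M i j|) = ‖M‖ := by
  rw [linfty_opNorm_def, Finset.sup_univ_eq_ciSup, NNReal.coe_iSup]
  simp [Real.norm_eq_abs]

theorem sandwich_sub_sandwich {R : Type*} [Ring R] (p q w v : R) :
    p * w * p - q * v * q = p * (w - v) * p + (p - q) * v * p + q * v * (p - q) := by
  noncomm_ring

theorem norm_sandwich_sub_sandwich_le {R : Type*} [NormedRing R] (p q w v : R) :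
    ‖p * w * p - q * v * q‖ ≤ ‖p‖ * ‖p‖ * ‖w - v‖ + ‖p - q‖ * ‖v‖ * (‖p‖ + ‖q‖) := by
  rw [sandwich_sub_sandwich]
  calc ‖p * (w - v) * p + (p - q) * v * p + q * v * (p - q)‖
      ≤ ‖p‖ * ‖w - v‖ * ‖p‖ + ‖p - q‖ * ‖v‖ * ‖p‖ + ‖q‖ * ‖v‖ * ‖p - q‖ := by
        refine norm_add₃_le.trans (add_le_add_three ?_ ?_ ?_) <;>
          exact (norm_mul_le _ _).trans (by gcongr; exact norm_mul_le _ _)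
    _ = _ := by ring

theorem abs_inv_sqrt_sub_inv_sqrt_le {a b x y : ℝ} (ha : 0 < a) (hb : 0 < b)
    (hax : a ≤ x) (hby : b ≤ y) :
    |(√x)⁻¹ - (√y)⁻¹| ≤ |x - y| / (√a * √b * (√a + √b)) := by
  have hx : 0 < √x := Real.sqrt_pos.2 (ha.trans_le hax)
  have hy : 0 < √y := Real.sqrt_pos.2 (hb.trans_le hby)
  have hsa : 0 < √a := Real.sqrt_pos.2 ha
  have hsb : 0 < √b := Real.sqrt_pos.2 hb
  have hdiff : (√x)⁻¹ - (√y)⁻¹ = (y - x) / (√x * √y * (√x + √y)) := by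
    have hsq : y - x = (√y + √x) * (√y - √x) := by
      rw [← sq_sub_sq, Real.sq_sqrt (ha.trans_le hax).le, Real.sq_sqrt (hb.trans_le hby).le]
    rw [hsq]
    field_simp
    ring
  have hsx : √a ≤ √x := Real.sqrt_le_sqrt hax
  have hsy : √b ≤ √y := Real.sqrt_le_sqrt hby
  rw [hdiff, abs_div, abs_sub_comm y x, abs_of_pos (by positivity : 0 < √x * √y * (√x + √y))]
  gcongr

section

variable {ι : Type*} [Fintype ι]

theorem norm_mulVec_one_le (M : Matrix ι ι ℝ) : ‖M *ᵥ fun _ => 1‖ ≤ ‖M‖ := by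
  have hone : ‖(fun _ => 1 : ι → ℝ)‖ ≤ 1 :=
    (pi_norm_le_iff_of_nonneg zero_le_one).2 fun _ => norm_one.le
  simpa using (linfty_opNorm_mulVec M _).trans (mul_le_of_le_one_right (norm_nonneg M) hone)

theorem sub_norm_le_add_mulVec_one {W : Matrix ι ι ℝ} {a : ℝ} (hW : ∀ i, a ≤ (W *ᵥ fun _ => 1) i)
    (E : Matrix ι ι ℝ) (i : ι) : a - ‖E‖ ≤ ((W + E) *ᵥ fun _ => 1) i := by
  have hEi : |(E *ᵥ fun _ => 1) i| ≤ ‖E‖ := (norm_le_pi_norm _ i).trans (norm_mulVec_one_le E)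
  rw [add_mulVec, Pi.add_apply]
  linarith [hW i, neg_abs_le ((E *ᵥ fun _ => 1) i)]

variable [DecidableEq ι]

theorem linfty_opNorm_diagonal_inv_sqrt_le {u : ι → ℝ} {a : ℝ} (ha : 0 < a) (hu : ∀ i, a ≤ u i) :
    ‖diagonal fun i => (√(u i))⁻¹‖ ≤ (√a)⁻¹ := by
  rw [linfty_opNorm_diagonal]
  refine (pi_norm_le_iff_of_nonneg (by positivity)).2 fun i => ?_
  rw [Real.norm_of_nonneg (by positivity)]
  exact inv_anti₀ (Real.sqrt_pos.2 ha) (Real.sqrt_le_sqrt (hu i))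

theorem linfty_opNorm_diagonal_inv_sqrt_sub_le {u v : ι → ℝ} {a b : ℝ} (ha : 0 < a) (hb : 0 < b)
    (hu : ∀ i, a ≤ u i) (hv : ∀ i, b ≤ v i) :
    ‖diagonal (fun i => (√(u i))⁻¹) - diagonal fun i => (√(v i))⁻¹‖ ≤
      ‖u - v‖ / (√a * √b * (√a + √b)) := by
  rw [diagonal_sub, linfty_opNorm_diagonal]
  refine (pi_norm_le_iff_of_nonneg (by positivity)).2 fun i => ?_
  refine (abs_inv_sqrt_sub_inv_sqrt_le ha hb (hu i) (hv i)).trans ?_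
  gcongr
  exact norm_le_pi_norm (u - v) i

noncomputable def symmNormalize (W : Matrix ι ι ℝ) : Matrix ι ι ℝ :=
  diagonal (fun i => (√((W *ᵥ fun _ => 1) i))⁻¹) * W *
    diagonal fun i => (√((W *ᵥ fun _ => 1) i))⁻¹

theorem linfty_opNorm_symmNormalize_sub_le {W : Matrix ι ι ℝ} {a : ℝ}
    (hW : ∀ i, a ≤ (W *ᵥ fun _ => 1) i) (E : Matrix ι ι ℝ) (hE : ‖E‖ < a) :
    ‖symmNormalize W - symmNormalize (W + E)‖ ≤ ‖E‖ * (‖W‖ + a) / (a * (a - ‖E‖)) := by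
  have ha : 0 < a := (norm_nonneg E).trans_lt hE
  have hgap : 0 < a - ‖E‖ := sub_pos.2 hE
  have hWE := sub_norm_le_add_mulVec_one hW E
  have hrow : ‖(W *ᵥ fun _ => 1) - (W + E) *ᵥ fun _ => 1‖ = ‖E *ᵥ fun _ => 1‖ := by
    rw [add_mulVec, sub_add_cancel_left, norm_neg]
  have hP := linfty_opNorm_diagonal_inv_sqrt_le ha hW
  have hQ := linfty_opNorm_diagonal_inv_sqrt_le hgap hWE
  have hPQ := linfty_opNorm_diagonal_inv_sqrt_sub_le ha hgap hW hWE
  rw [hrow] at hPQ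
  calc ‖symmNormalize W - symmNormalize (W + E)‖
      ≤ _ := norm_sandwich_sub_sandwich_le _ _ W (W + E)
    _ ≤ (√a)⁻¹ * (√a)⁻¹ * ‖E‖ + ‖E‖ / (√a * √(a - ‖E‖) * (√a + √(a - ‖E‖)))
          * (‖W‖ + ‖E‖) * ((√a)⁻¹ + (√(a - ‖E‖))⁻¹) := by
      rw [sub_add_cancel_left, norm_neg]
      gcongr
      · exact hPQ.trans (by gcongr; exact norm_mulVec_one_le E)
      · exact norm_add_le W E
    _ = ‖E‖ * (‖W‖ + a) / (a * (a - ‖E‖)) := by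
      field_simp
      rw [Real.sq_sqrt ha.le, Real.sq_sqrt hgap.le]
      ring

end

theorem normalization_error_propagation_general
    (n : ℕ) (W E : Matrix (Fin n) (Fin n) ℝ)
    (WE : Matrix (Fin n) (Fin n) ℝ) (hWE : WE = W + E)
    (d dE : Fin n → ℝ)
    (hd : d = W *ᵥ (fun _ => 1)) (hdE : dE = WE *ᵥ (fun _ => 1))
    (normW normE dmin eta eps : ℝ)
    (hnormW : normW = ⨆ i, ∑ j, |W i j|)
    (hnormE : normE = ⨆ i, ∑ j, |E i j|)
    (hdmin : dmin = ⨅ i, d i)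
    (heta : eta = dmin / normW)
    (heps : eps = normE / normW)
    (hlt : eps < eta)
    (Dinvsqrt DEinvsqrt A AE : Matrix (Fin n) (Fin n) ℝ)
    (hDinv : Dinvsqrt = Matrix.diagonal (fun i => (Real.sqrt (d i))⁻¹))
    (hDEinv : DEinvsqrt = Matrix.diagonal (fun i => (Real.sqrt (dE i))⁻¹))
    (hA : A = Dinvsqrt * W * Dinvsqrt)
    (hAE : AE = DEinvsqrt * WE * DEinvsqrt) :
    (⨆ i, ∑ j, |(A - AE) i j|) ≤ eps * (1 + eta) / (eta * (eta - eps)) := by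
  subst hWE hd hdE hDinv hDEinv hA hAE hnormW hnormE
  simp only [iSup_sum_abs_eq_linfty_opNorm] at heta heps ⊢
  have hnormW_pos : 0 < ‖W‖ := by
    -- if `‖W‖ = 0` then `eps = eta = 0`, as division by zero gives zero
    refine (norm_nonneg W).lt_of_ne' fun h => ?_
    simp [heta, heps, h] at hlt
  have hnormE_lt : ‖E‖ < dmin := by
    rwa [heps, heta, div_lt_div_iff_of_pos_right hnormW_pos] at hlt
  have hd_ge : ∀ i, dmin ≤ (W *ᵥ fun _ => 1) i :=
    fun i => hdmin ▸ ciInf_le (Set.finite_range _).bddBelow i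
  calc ‖symmNormalize W - symmNormalize (W + E)‖
      ≤ ‖E‖ * (‖W‖ + dmin) / (dmin * (dmin - ‖E‖)) :=
        linfty_opNorm_symmNormalize_sub_le hd_ge E hnormE_lt
    _ = eps * (1 + eta) / (eta * (eta - eps)) := by
      rw [heps, heta]
      field_simp

theorem normalization_error_propagation
    (n : ℕ) (hn : 0 < n) (W E : Matrix (Fin n) (Fin n) ℝ)
    (hnonneg : ∀ i j, 0 ≤ W i j) (hpos : ∀ i, ∃ j, 0 < W i j)
    (WE : Matrix (Fin n) (Fin n) ℝ) (hWE : WE = W + E)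
    (d dE : Fin n → ℝ)
    (hd : d = W *ᵥ (fun _ => 1)) (hdE : dE = WE *ᵥ (fun _ => 1))
    (normW normE dmin eta eps : ℝ)
    (hnormW : normW = ⨆ i, ∑ j, |W i j|)
    (hnormE : normE = ⨆ i, ∑ j, |E i j|)
    (hdmin : dmin = ⨅ i, d i)
    (heta : eta = dmin / normW)
    (heps : eps = normE / normW)
    (hlt : eps < eta)
    (Dinvsqrt DEinvsqrt A AE : Matrix (Fin n) (Fin n) ℝ)
    (hDinv : Dinvsqrt = Matrix.diagonal (fun i => (Real.sqrt (d i))⁻¹))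
    (hDEinv : DEinvsqrt = Matrix.diagonal (fun i => (Real.sqrt (dE i))⁻¹))
    (hA : A = Dinvsqrt * W * Dinvsqrt)
    (hAE : AE = DEinvsqrt * WE * DEinvsqrt) :
    (⨆ i, ∑ j, |(A - AE) i j|) ≤ eps * (1 + eta) / (eta * (eta - eps)) :=
  normalization_error_propagation_general n W E WE hWE d dE hd hdE normW normE dmin eta eps hnormW
    hnormE hdmin heta heps hlt Dinvsqrt DEinvsqrt A AE hDinv hDEinv hA hAE
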